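/- arXiv:1904.05215 — 4 statements merged into one kernel-verified Lean document; each statement's English description precedes it below -/
import Mathlib

section
/- Let Φ be a smooth conformal immersion with Gauss map n, mean curvature H and tracefree curvature Å. Then ∇n × ∇⊥n = (|Å∇Φ|² − |H∇Φ|²) n pointwise, where ∇n × ∇⊥n := −2 n_x × n_y. -/
open Real MeasureTheory

noncomputable section

/-- Partial derivative in the first coordinate direction. -/
def pd1 {E : Type*} [NormedAddCommGroup E] [NormedSpace ℝ E]
    (f : ℝ × ℝ → E) : ℝ × ℝ → E := fun p => fderiv ℝ f p (1, 0)

/-- Partial derivative in the second coordinate direction. -/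
def pd2 {E : Type*} [NormedAddCommGroup E] [NormedSpace ℝ E]
    (f : ℝ × ℝ → E) : ℝ × ℝ → E := fun p => fderiv ℝ f p (0, 1)

/-- Euclidean dot product on ℝ³. -/
def dot3 (u v : Fin 3 → ℝ) : ℝ := ∑ i, u i * v i

/-- The unit disk in ℝ². -/
def D2 : Set (ℝ × ℝ) := Metric.ball (0 : ℝ × ℝ) 1

/- ### Auxiliary algebra lemmas -/

lemma dot3_comm (u v : Fin 3 → ℝ) : dot3 u v = dot3 v u := by
  simp [dot3, Fin.sum_univ_three]; ring

lemma dot3_smul_left (a : ℝ) (x y : Fin 3 → ℝ) : dot3 (a • x) y = a * dot3 x y := by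
  simp [dot3, Fin.sum_univ_three]; ring

lemma dot3_smul_right (a : ℝ) (x y : Fin 3 → ℝ) : dot3 x (a • y) = a * dot3 x y := by
  simp [dot3, Fin.sum_univ_three]; ring

lemma dot3_smul_smul (a b : ℝ) (x y : Fin 3 → ℝ) :
    dot3 (a • x) (b • y) = a * b * dot3 x y := by
  simp [dot3, Fin.sum_univ_three]; ring

lemma dot3_comb (α β γ δ : ℝ) (x y : Fin 3 → ℝ) :
    dot3 (α • x + β • y) (γ • x + δ • y)
      = α * γ * dot3 x x + (α * δ + β * γ) * dot3 x y + β * δ * dot3 y y := by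
  simp [dot3, Fin.sum_univ_three]; ring

lemma lagrange3 (u v : Fin 3 → ℝ) :
    dot3 (crossProduct u v) (crossProduct u v)
      = dot3 u u * dot3 v v - dot3 u v ^ 2 := by
  simp [dot3, cross_apply, Fin.sum_univ_three]; ring

lemma cross_orth_left (u v : Fin 3 → ℝ) : dot3 (crossProduct u v) u = 0 := by
  simp [dot3, cross_apply, Fin.sum_univ_three]; ring

lemma cross_orth_right (u v : Fin 3 → ℝ) : dot3 (crossProduct u v) v = 0 := by
  simp [dot3, cross_apply, Fin.sum_univ_three]; ring

lemma cross_comb (a b c d : ℝ) (u v : Fin 3 → ℝ) :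
    crossProduct (a • u + b • v) (c • u + d • v)
      = (a * d - b * c) • crossProduct u v := by
  funext i
  fin_cases i <;>
    · simp [cross_apply, Pi.add_apply, Pi.smul_apply, smul_eq_mul]
      ring

lemma expand_basis (u v w : Fin 3 → ℝ) (huv : dot3 u v = 0) :
    (dot3 u u * dot3 v v) • w
      = (dot3 w u * dot3 v v) • u + (dot3 w v * dot3 u u) • v
        + (dot3 w (crossProduct u v)) • crossProduct u v := by
  simp only [dot3, Fin.sum_univ_three] at huv
  funext i
  fin_cases i
  · simp [dot3, cross_apply, Fin.sum_univ_three]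
    linear_combination -(-(u 2 * v 2 * w 0) + u 2 * v 0 * w 2 - u 1 * v 1 * w 0 + u 1 * v 0 * w 1
      + u 0 * v 2 * w 2 + u 0 * v 1 * w 1 + u 0 * v 0 * w 0) * huv
  · simp [dot3, cross_apply, Fin.sum_univ_three]
    linear_combination -(-(u 2 * v 2 * w 1) + u 2 * v 1 * w 2 + u 1 * v 2 * w 2 + u 1 * v 1 * w 1
      + u 1 * v 0 * w 0 + u 0 * v 1 * w 0 - u 0 * v 0 * w 1) * huv
  · simp [dot3, cross_apply, Fin.sum_univ_three]
    linear_combination -(u 2 * v 2 * w 2 + u 2 * v 1 * w 1 + u 2 * v 0 * w 0 + u 1 * v 2 * w 1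
      - u 1 * v 1 * w 2 + u 0 * v 2 * w 0 - u 0 * v 0 * w 2) * huv

/- ### Auxiliary calculus lemmas -/

lemma hasFDerivAt_dot3 {u v : ℝ × ℝ → Fin 3 → ℝ} {p : ℝ × ℝ}
    (hu : DifferentiableAt ℝ u p) (hv : DifferentiableAt ℝ v p) :
    HasFDerivAt (fun q => dot3 (u q) (v q))
      (∑ i, (u p i • ((ContinuousLinearMap.proj i).comp (fderiv ℝ v p))
        + v p i • ((ContinuousLinearMap.proj i).comp (fderiv ℝ u p)))) p := by
  have hui : ∀ i : Fin 3, HasFDerivAt (fun q => u q i)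
      ((ContinuousLinearMap.proj i).comp (fderiv ℝ u p)) p :=
    fun i => (ContinuousLinearMap.proj (R := ℝ) (φ := fun _ : Fin 3 => ℝ) i).hasFDerivAt.comp p
      hu.hasFDerivAt
  have hvi : ∀ i : Fin 3, HasFDerivAt (fun q => v q i)
      ((ContinuousLinearMap.proj i).comp (fderiv ℝ v p)) p :=
    fun i => (ContinuousLinearMap.proj (R := ℝ) (φ := fun _ : Fin 3 => ℝ) i).hasFDerivAt.comp p
      hv.hasFDerivAt
  have := HasFDerivAt.fun_sum (fun i (_ : i ∈ Finset.univ) => (hui i).mul (hvi i))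
  simpa [dot3] using this

lemma fderiv_dot3_apply {u v : ℝ × ℝ → Fin 3 → ℝ} {p : ℝ × ℝ}
    (hu : DifferentiableAt ℝ u p) (hv : DifferentiableAt ℝ v p) (w : ℝ × ℝ) :
    fderiv ℝ (fun q => dot3 (u q) (v q)) p w
      = dot3 (fderiv ℝ u p w) (v p) + dot3 (u p) (fderiv ℝ v p w) := by
  rw [(hasFDerivAt_dot3 hu hv).fderiv]
  simp [dot3, Fin.sum_univ_three]
  ring

lemma differentiableAt_dot3 {u v : ℝ × ℝ → Fin 3 → ℝ} {p : ℝ × ℝ}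
    (hu : DifferentiableAt ℝ u p) (hv : DifferentiableAt ℝ v p) :
    DifferentiableAt ℝ (fun q => dot3 (u q) (v q)) p :=
  (hasFDerivAt_dot3 hu hv).differentiableAt

lemma contDiff_pd1 {E : Type*} [NormedAddCommGroup E] [NormedSpace ℝ E]
    {f : ℝ × ℝ → E} (hf : ContDiff ℝ (⊤ : ℕ∞) f) : ContDiff ℝ (⊤ : ℕ∞) (pd1 f) :=
  (hf.fderiv_right (by simp)).clm_apply contDiff_const

lemma contDiff_pd2 {E : Type*} [NormedAddCommGroup E] [NormedSpace ℝ E]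
    {f : ℝ × ℝ → E} (hf : ContDiff ℝ (⊤ : ℕ∞) f) : ContDiff ℝ (⊤ : ℕ∞) (pd2 f) :=
  (hf.fderiv_right (by simp)).clm_apply contDiff_const

lemma pd_symm {Φ : ℝ × ℝ → Fin 3 → ℝ} (hΦ : ContDiff ℝ (⊤ : ℕ∞) Φ) (p : ℝ × ℝ) :
    pd1 (pd2 Φ) p = pd2 (pd1 Φ) p := by
  have hd : Differentiable ℝ Φ := hΦ.differentiable (by simp)
  have hd' : Differentiable ℝ (fderiv ℝ Φ) := (hΦ.fderiv_right (m := (⊤ : ℕ∞)) (by simp)).differentiable (by simp)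
  have h1 : pd1 (pd2 Φ) p = fderiv ℝ (fderiv ℝ Φ) p (1, 0) (0, 1) := by
    show fderiv ℝ (fun q => fderiv ℝ Φ q (0,1)) p (1,0) = _
    rw [fderiv_clm_apply (hd' p) (differentiableAt_const _)]
    simp
  have h2 : pd2 (pd1 Φ) p = fderiv ℝ (fderiv ℝ Φ) p (0, 1) (1, 0) := by
    show fderiv ℝ (fun q => fderiv ℝ Φ q (1,0)) p (0,1) = _
    rw [fderiv_clm_apply (hd' p) (differentiableAt_const _)]
    simp
  rw [h1, h2]
  exact second_derivative_symmetric (fun y => (hd y).hasFDerivAt) (hd' p).hasFDerivAt _ _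

theorem stmt4
    (Φ : ℝ × ℝ → Fin 3 → ℝ) (lam : ℝ × ℝ → ℝ) (n : ℝ × ℝ → Fin 3 → ℝ)
    (e f g H : ℝ × ℝ → ℝ) (A1 A2 : ℝ × ℝ → Fin 3 → ℝ)
    (hΦ : ContDiff ℝ (⊤ : ℕ∞) Φ)
    (hconf : ∀ p ∈ D2,
      dot3 (pd1 Φ p) (pd2 Φ p) = 0 ∧
      dot3 (pd1 Φ p) (pd1 Φ p) = Real.exp (2 * lam p) ∧
      dot3 (pd2 Φ p) (pd2 Φ p) = Real.exp (2 * lam p))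
    (hn : ∀ p ∈ D2,
      n p = (Real.sqrt (dot3 (crossProduct (pd1 Φ p) (pd2 Φ p))
          (crossProduct (pd1 Φ p) (pd2 Φ p))))⁻¹ •
        crossProduct (pd1 Φ p) (pd2 Φ p))
    (he : ∀ p ∈ D2, e p = dot3 (pd1 (pd1 Φ) p) (n p))
    (hf : ∀ p ∈ D2, f p = dot3 (pd2 (pd1 Φ) p) (n p))
    (hg : ∀ p ∈ D2, g p = dot3 (pd2 (pd2 Φ) p) (n p))
    (hH : ∀ p ∈ D2, H p = (e p + g p) / (2 * Real.exp (2 * lam p)))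
    (hA1 : ∀ p ∈ D2, A1 p = Real.exp (-(2 * lam p)) •
        (((e p - g p) / 2) • pd1 Φ p + f p • pd2 Φ p))
    (hA2 : ∀ p ∈ D2, A2 p = Real.exp (-(2 * lam p)) •
        (f p • pd1 Φ p + ((g p - e p) / 2) • pd2 Φ p)) :
    ∀ p ∈ D2,
      (-2 : ℝ) • crossProduct (pd1 n p) (pd2 n p)
        = ((dot3 (A1 p) (A1 p) + dot3 (A2 p) (A2 p))
            - H p ^ 2 * (dot3 (pd1 Φ p) (pd1 Φ p) + dot3 (pd2 Φ p) (pd2 Φ p))) • n p := by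
  intro p hp
  obtain ⟨huv, huu, hvv⟩ := hconf p hp
  set E : ℝ := Real.exp (2 * lam p) with hE
  have hEpos : 0 < E := Real.exp_pos _
  have hEne : E ≠ 0 := ne_of_gt hEpos
  -- differentiability of first and second derivatives of Φ
  have hU : Differentiable ℝ (pd1 Φ) := (contDiff_pd1 hΦ).differentiable (by simp)
  have hV : Differentiable ℝ (pd2 Φ) := (contDiff_pd2 hΦ).differentiable (by simp)
  have hUi : ∀ i, Differentiable ℝ (fun q => pd1 Φ q i) :=
    fun i q => (differentiableAt_pi.mp (hU q)) i
  have hVi : ∀ i, Differentiable ℝ (fun q => pd2 Φ q i) :=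
    fun i q => (differentiableAt_pi.mp (hV q)) i
  -- the (non-normalized) normal field
  have hc : Differentiable ℝ (fun q => crossProduct (pd1 Φ q) (pd2 Φ q)) := by
    intro q
    rw [differentiableAt_pi]
    intro i
    fin_cases i <;>
      · simp only [cross_apply, Matrix.cons_val_zero, Matrix.cons_val_one, Matrix.head_cons,
          Matrix.cons_val_two, Matrix.tail_cons]
        exact ((hUi _ q).mul (hVi _ q)).sub ((hUi _ q).mul (hVi _ q))
  have hs : Differentiable ℝ (fun q => dot3 (crossProduct (pd1 Φ q) (pd2 Φ q))
      (crossProduct (pd1 Φ q) (pd2 Φ q))) :=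
    fun q => differentiableAt_dot3 (hc q) (hc q)
  -- pointwise facts on D2
  have hsq : ∀ q ∈ D2, dot3 (crossProduct (pd1 Φ q) (pd2 Φ q)) (crossProduct (pd1 Φ q) (pd2 Φ q))
      = Real.exp (2 * lam q) * Real.exp (2 * lam q) := by
    intro q hq
    obtain ⟨h1, h2, h3⟩ := hconf q hq
    rw [lagrange3, h1, h2, h3]
    ring
  have hsqrt : ∀ q ∈ D2,
      Real.sqrt (dot3 (crossProduct (pd1 Φ q) (pd2 Φ q)) (crossProduct (pd1 Φ q) (pd2 Φ q)))
        = Real.exp (2 * lam q) := by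
    intro q hq
    rw [hsq q hq, Real.sqrt_mul_self (Real.exp_nonneg _)]
  -- unit normal identities on D2
  have hnn : ∀ q ∈ D2, dot3 (n q) (n q) = 1 := by
    intro q hq
    rw [hn q hq, dot3_smul_smul, hsqrt q hq, hsq q hq]
    field_simp
  have hnu : ∀ q ∈ D2, dot3 (n q) (pd1 Φ q) = 0 := by
    intro q hq
    rw [hn q hq, dot3_smul_left, cross_orth_left, mul_zero]
  have hnv : ∀ q ∈ D2, dot3 (n q) (pd2 Φ q) = 0 := by
    intro q hq
    rw [hn q hq, dot3_smul_left, cross_orth_right, mul_zero]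
  have hcn : crossProduct (pd1 Φ p) (pd2 Φ p) = E • n p := by
    rw [hn p hp, hsqrt p hp, smul_smul, ← hE, mul_inv_cancel₀ hEne, one_smul]
  -- differentiability of n at p
  have hmem : D2 ∈ nhds p := Metric.isOpen_ball.mem_nhds hp
  have hdn : DifferentiableAt ℝ n p := by
    refine DifferentiableAt.congr_of_eventuallyEq ?_ (Filter.eventuallyEq_of_mem hmem hn)
    have hsne : dot3 (crossProduct (pd1 Φ p) (pd2 Φ p)) (crossProduct (pd1 Φ p) (pd2 Φ p)) ≠ 0 := by
      rw [hsq p hp]; positivity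
    have hsqrtne : Real.sqrt (dot3 (crossProduct (pd1 Φ p) (pd2 Φ p))
        (crossProduct (pd1 Φ p) (pd2 Φ p))) ≠ 0 := by
      rw [hsqrt p hp]; exact ne_of_gt (Real.exp_pos _)
    exact (((hs p).sqrt hsne).inv hsqrtne).smul (hc p)
  -- derivative identities at p
  have key0 : ∀ w : ℝ × ℝ, dot3 (fderiv ℝ n p w) (n p) = 0 := by
    intro w
    have hF : (fun q => dot3 (n q) (n q)) =ᶠ[nhds p] (fun _ => (1 : ℝ)) :=
      Filter.eventuallyEq_of_mem hmem hnn
    have h0 : fderiv ℝ (fun q => dot3 (n q) (n q)) p = 0 := by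
      rw [hF.fderiv_eq]; exact fderiv_const_apply 1
    have h1 := fderiv_dot3_apply hdn hdn w
    rw [h0] at h1
    simp only [ContinuousLinearMap.zero_apply] at h1
    have h2 : dot3 (n p) (fderiv ℝ n p w) = dot3 (fderiv ℝ n p w) (n p) := dot3_comm _ _
    linarith [h1, h2.symm ▸ h1]
  have key1 : ∀ w : ℝ × ℝ, dot3 (fderiv ℝ n p w) (pd1 Φ p)
      = - dot3 (n p) (fderiv ℝ (pd1 Φ) p w) := by
    intro w
    have hF : (fun q => dot3 (n q) (pd1 Φ q)) =ᶠ[nhds p] (fun _ => (0 : ℝ)) :=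
      Filter.eventuallyEq_of_mem hmem hnu
    have h0 : fderiv ℝ (fun q => dot3 (n q) (pd1 Φ q)) p = 0 := by
      rw [hF.fderiv_eq]; exact fderiv_const_apply 0
    have h1 := fderiv_dot3_apply hdn (hU p) w
    rw [h0] at h1
    simp only [ContinuousLinearMap.zero_apply] at h1
    linarith
  have key2 : ∀ w : ℝ × ℝ, dot3 (fderiv ℝ n p w) (pd2 Φ p)
      = - dot3 (n p) (fderiv ℝ (pd2 Φ) p w) := by
    intro w
    have hF : (fun q => dot3 (n q) (pd2 Φ q)) =ᶠ[nhds p] (fun _ => (0 : ℝ)) :=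
      Filter.eventuallyEq_of_mem hmem hnv
    have h0 : fderiv ℝ (fun q => dot3 (n q) (pd2 Φ q)) p = 0 := by
      rw [hF.fderiv_eq]; exact fderiv_const_apply 0
    have h1 := fderiv_dot3_apply hdn (hV p) w
    rw [h0] at h1
    simp only [ContinuousLinearMap.zero_apply] at h1
    linarith
  -- the four Weingarten coefficients
  have h1u : dot3 (pd1 n p) (pd1 Φ p) = -(e p) := by
    have := key1 (1, 0)
    rw [show fderiv ℝ (pd1 Φ) p (1, 0) = pd1 (pd1 Φ) p from rfl,
      dot3_comm (n p), ← he p hp] at this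
    exact this
  have h1v : dot3 (pd1 n p) (pd2 Φ p) = -(f p) := by
    have := key2 (1, 0)
    rw [show fderiv ℝ (pd2 Φ) p (1, 0) = pd1 (pd2 Φ) p from rfl, pd_symm hΦ p,
      dot3_comm (n p), ← hf p hp] at this
    exact this
  have h2u : dot3 (pd2 n p) (pd1 Φ p) = -(f p) := by
    have := key1 (0, 1)
    rw [show fderiv ℝ (pd1 Φ) p (0, 1) = pd2 (pd1 Φ) p from rfl,
      dot3_comm (n p), ← hf p hp] at this
    exact this
  have h2v : dot3 (pd2 n p) (pd2 Φ p) = -(g p) := by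
    have := key2 (0, 1)
    rw [show fderiv ℝ (pd2 Φ) p (0, 1) = pd2 (pd2 Φ) p from rfl,
      dot3_comm (n p), ← hg p hp] at this
    exact this
  have h1n : dot3 (pd1 n p) (n p) = 0 := key0 (1, 0)
  have h2n : dot3 (pd2 n p) (n p) = 0 := key0 (0, 1)
  -- expansion of pd1 n p and pd2 n p in the orthogonal frame
  have hEEne : E * E ≠ 0 := mul_ne_zero hEne hEne
  have hw1 : pd1 n p = ((E * E)⁻¹ * (-(e p) * E)) • pd1 Φ p
      + ((E * E)⁻¹ * (-(f p) * E)) • pd2 Φ p := by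
    have hexp := expand_basis (pd1 Φ p) (pd2 Φ p) (pd1 n p) huv
    rw [huu, hvv, h1u, h1v, hcn, dot3_smul_right, h1n, mul_zero, zero_smul, add_zero] at hexp
    calc pd1 n p = (E * E)⁻¹ • ((E * E) • pd1 n p) := by
          rw [smul_smul, inv_mul_cancel₀ hEEne, one_smul]
      _ = _ := by rw [hexp, smul_add, smul_smul, smul_smul]
  have hw2 : pd2 n p = ((E * E)⁻¹ * (-(f p) * E)) • pd1 Φ p
      + ((E * E)⁻¹ * (-(g p) * E)) • pd2 Φ p := by
    have hexp := expand_basis (pd1 Φ p) (pd2 Φ p) (pd2 n p) huv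
    rw [huu, hvv, h2u, h2v, hcn, dot3_smul_right, h2n, mul_zero, zero_smul, add_zero] at hexp
    calc pd2 n p = (E * E)⁻¹ • ((E * E) • pd2 n p) := by
          rw [smul_smul, inv_mul_cancel₀ hEEne, one_smul]
      _ = _ := by rw [hexp, smul_add, smul_smul, smul_smul]
  -- now compute both sides
  rw [hw1, hw2, cross_comb, hcn, hA1 p hp, hA2 p hp, hH p hp, huu, hvv,
    dot3_smul_smul, dot3_smul_smul, dot3_comb, dot3_comb, huv, huu, hvv,
    smul_smul, smul_smul]
  congr 1
  rw [Real.exp_neg, ← hE]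
  field_simp
  ring
end
end

section
/- Let Φ be a smooth conformal immersion with Gauss map n, conformal factor λ, tracefree second fundamental form Å, and let L, S, R⃗ be the Willmore quantities with ∇⊥S = ⟨L, ∇⊥Φ⟩ and ∇⊥R⃗ = L × ∇⊥Φ + 2H∇⊥Φ. Then pointwise ⟨Å∇Φ, ∇⊥R⃗⟩ = 0. -/
open Real MeasureTheory

noncomputable section

theorem stmt10
    (Φ : ℝ × ℝ → Fin 3 → ℝ) (lam : ℝ × ℝ → ℝ) (n : ℝ × ℝ → Fin 3 → ℝ)
    (e f g H : ℝ × ℝ → ℝ) (A1 A2 L : ℝ × ℝ → Fin 3 → ℝ)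
    (hΦ : ContDiff ℝ (⊤ : ℕ∞) Φ)
    (hconf : ∀ p ∈ D2,
      dot3 (pd1 Φ p) (pd2 Φ p) = 0 ∧
      dot3 (pd1 Φ p) (pd1 Φ p) = Real.exp (2 * lam p) ∧
      dot3 (pd2 Φ p) (pd2 Φ p) = Real.exp (2 * lam p))
    (hn : ∀ p ∈ D2,
      n p = (Real.sqrt (dot3 (crossProduct (pd1 Φ p) (pd2 Φ p))
          (crossProduct (pd1 Φ p) (pd2 Φ p))))⁻¹ •
        crossProduct (pd1 Φ p) (pd2 Φ p))
    (he : ∀ p ∈ D2, e p = dot3 (pd1 (pd1 Φ) p) (n p))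
    (hf : ∀ p ∈ D2, f p = dot3 (pd2 (pd1 Φ) p) (n p))
    (hg : ∀ p ∈ D2, g p = dot3 (pd2 (pd2 Φ) p) (n p))
    (hH : ∀ p ∈ D2, H p = (e p + g p) / (2 * Real.exp (2 * lam p)))
    (hA1 : ∀ p ∈ D2, A1 p = Real.exp (-(2 * lam p)) •
        (((e p - g p) / 2) • pd1 Φ p + f p • pd2 Φ p))
    (hA2 : ∀ p ∈ D2, A2 p = Real.exp (-(2 * lam p)) •
        (f p • pd1 Φ p + ((g p - e p) / 2) • pd2 Φ p)) :
    ∀ p ∈ D2,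
      dot3 (A1 p) (crossProduct (L p) (-(pd2 Φ p)) + (2 * H p) • (-(pd2 Φ p)))
        + dot3 (A2 p) (crossProduct (L p) (pd1 Φ p) + (2 * H p) • (pd1 Φ p)) = 0 := by
  intro p hp
  obtain ⟨h0, h1, h2⟩ := hconf p hp
  rw [hA1 p hp, hA2 p hp]
  simp only [dot3, crossProduct, Fin.sum_univ_three, Pi.add_apply, Pi.smul_apply,
    Pi.neg_apply, smul_eq_mul, LinearMap.mk₂_apply, Matrix.cons_val_zero,
    Matrix.cons_val_one, Matrix.head_cons, Matrix.cons_val_two, Matrix.tail_cons] at h0 h1 h2 ⊢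
  linear_combination (Real.exp (-(2 * lam p)) * 2 * H p * f p) * (h1 - h2)
    - (Real.exp (-(2 * lam p)) * 2 * H p * (e p - g p)) * h0

end
end

section
/- Let Φ be a smooth conformal immersion with Willmore quantities L, S, R⃗ (∇⊥S = ⟨L, ∇⊥Φ⟩, ∇⊥R⃗ = L × ∇⊥Φ + 2H∇⊥Φ), and Å the tracefree second fundamental form. Then pointwise Å∇Φ × ∇⊥R⃗ = −∇⊥S · Å∇Φ (sum over the two components, with × the ℝ³ cross product applied componentwise). -/
open Real MeasureTheory

noncomputable section

theorem stmt11
    (Φ : ℝ × ℝ → Fin 3 → ℝ) (lam : ℝ × ℝ → ℝ) (n : ℝ × ℝ → Fin 3 → ℝ)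
    (e f g H : ℝ × ℝ → ℝ) (A1 A2 L : ℝ × ℝ → Fin 3 → ℝ)
    (hΦ : ContDiff ℝ (⊤ : ℕ∞) Φ)
    (hconf : ∀ p ∈ D2,
      dot3 (pd1 Φ p) (pd2 Φ p) = 0 ∧
      dot3 (pd1 Φ p) (pd1 Φ p) = Real.exp (2 * lam p) ∧
      dot3 (pd2 Φ p) (pd2 Φ p) = Real.exp (2 * lam p))
    (hn : ∀ p ∈ D2,
      n p = (Real.sqrt (dot3 (crossProduct (pd1 Φ p) (pd2 Φ p))
          (crossProduct (pd1 Φ p) (pd2 Φ p))))⁻¹ •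
        crossProduct (pd1 Φ p) (pd2 Φ p))
    (he : ∀ p ∈ D2, e p = dot3 (pd1 (pd1 Φ) p) (n p))
    (hf : ∀ p ∈ D2, f p = dot3 (pd2 (pd1 Φ) p) (n p))
    (hg : ∀ p ∈ D2, g p = dot3 (pd2 (pd2 Φ) p) (n p))
    (hH : ∀ p ∈ D2, H p = (e p + g p) / (2 * Real.exp (2 * lam p)))
    (hA1 : ∀ p ∈ D2, A1 p = Real.exp (-(2 * lam p)) •
        (((e p - g p) / 2) • pd1 Φ p + f p • pd2 Φ p))
    (hA2 : ∀ p ∈ D2, A2 p = Real.exp (-(2 * lam p)) •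
        (f p • pd1 Φ p + ((g p - e p) / 2) • pd2 Φ p)) :
    ∀ p ∈ D2,
      crossProduct (A1 p)
          (crossProduct (L p) (-(pd2 Φ p)) + (2 * H p) • (-(pd2 Φ p)))
        + crossProduct (A2 p)
          (crossProduct (L p) (pd1 Φ p) + (2 * H p) • (pd1 Φ p))
        = -((dot3 (L p) (-(pd2 Φ p))) • A1 p + (dot3 (L p) (pd1 Φ p)) • A2 p) := by
  intro p hp
  obtain ⟨h1, h2, h3⟩ := hconf p hp
  rw [hA1 p hp, hA2 p hp]
  set u := pd1 Φ p with hu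
  set v := pd2 Φ p with hv
  simp only [dot3, Fin.sum_univ_three] at h1 h2 h3 ⊢
  funext i
  fin_cases i <;>
    simp only [cross_apply, Pi.add_apply, Pi.smul_apply, Pi.neg_apply, smul_eq_mul,
      Fin.zero_eta, Fin.mk_one, Fin.isValue, Matrix.cons_val_zero, Matrix.cons_val_one,
      Matrix.head_cons, Matrix.cons_val_two, Matrix.tail_cons, Fin.reduceFinMk]
  · linear_combination (Real.exp (-(2 * lam p)) * L p 0) *
      (f p * h2 - f p * h3 - (e p - g p) * h1)
  · linear_combination (Real.exp (-(2 * lam p)) * L p 1) *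
      (f p * h2 - f p * h3 - (e p - g p) * h1)
  · linear_combination (Real.exp (-(2 * lam p)) * L p 2) *
      (f p * h2 - f p * h3 - (e p - g p) * h1)

end
end

section
/- Let f ∈ L¹(D) on the unit disk and let φ solve Δφ = f in D with φ = 0 on ∂D. Then φ ∈ L^{2,∞}(D) and ‖φ‖_{L^{2,∞}(D)} ≤ C‖f‖_{L¹(D)} for a universal constant C. -/
open Real MeasureTheory

/-- The weak-L² (L^{2,∞}) quasinorm of a function on a subset of ℂ,
    via the distribution function: sup_{t>0} t · vol{z ∈ s : |f z| > t}^{1/2}. -/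
noncomputable def wnorm2 (f : ℂ → ℝ) (s : Set ℂ) : ENNReal :=
  ⨆ t : {t : ℝ // 0 < t}, ENNReal.ofReal t.1 *
    (MeasureTheory.volume {z : ℂ | z ∈ s ∧ (t.1 : ℝ) < |f z|}) ^ (1 / 2 : ℝ)

/-- The Green function of the unit disk: G(z,w) = (1/2π)·log|(z−w)/(1−w̄z)|. -/
noncomputable def greenD (z w : ℂ) : ℝ :=
  (1 / (2 * Real.pi)) * Real.log ‖(z - w) / (1 - (starRingEnd ℂ) w * z)‖

/-- The solution of Δφ = f in D, φ = 0 on ∂D, given by the Green function. -/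
noncomputable def greenSol (f : ℂ → ℝ) (z : ℂ) : ℝ :=
  ∫ w in Metric.ball (0 : ℂ) 1, greenD z w * f w

/-!
On the closed disk the Green function satisfies `|G(z, w)| ≤ (2π)⁻¹ log (2 / |z - w|)`, and the
square of this majorant is integrable near the singularity, so the functions `G(·, w)` are bounded
in `L²(D)` uniformly in `w ∈ D`. Cauchy–Schwarz against the measure `|f(w)| dw` and Tonelli then
give `‖φ‖_{L²(D)} ≤ C ‖f‖_{L¹(D)}`, and the weak-`L²` bound follows from Chebyshev's inequality.
-/

open Metric Function
open scoped ENNReal ComplexConjugate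

theorem sq_lintegral_mul_le {α : Type*} [MeasurableSpace α] (μ : Measure α) {g f : α → ℝ≥0∞}
    (hg : AEMeasurable g μ) (hf : AEMeasurable f μ) :
    (∫⁻ a, g a * f a ∂μ) ^ 2 ≤ (∫⁻ a, g a ^ 2 * f a ∂μ) * ∫⁻ a, f a ∂μ := by
  have hsqrt : ∀ x : ℝ≥0∞, (x ^ (1 / 2 : ℝ)) ^ 2 = x := fun x => by
    rw [← ENNReal.rpow_natCast, ← ENNReal.rpow_mul]; norm_num
  have holder := ENNReal.lintegral_mul_le_Lp_mul_Lq μ Real.HolderConjugate.two_two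
    (hg.mul (hf.pow_const (1 / 2 : ℝ))) (hf.pow_const (1 / 2 : ℝ))
  simp only [Pi.mul_apply, ENNReal.rpow_two, mul_pow, hsqrt, mul_assoc, ← sq] at holder
  calc (∫⁻ a, g a * f a ∂μ) ^ 2
      ≤ ((∫⁻ a, g a ^ 2 * f a ∂μ) ^ (1 / 2 : ℝ) * (∫⁻ a, f a ∂μ) ^ (1 / 2 : ℝ)) ^ 2 :=
        pow_le_pow_left₀ zero_le holder 2
    _ = (∫⁻ a, g a ^ 2 * f a ∂μ) * ∫⁻ a, f a ∂μ := by rw [mul_pow, hsqrt, hsqrt]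

theorem lintegral_sq_lintegral_mul_le {α β : Type*} [MeasurableSpace α] [MeasurableSpace β]
    {μ : Measure α} {ν : Measure β} [SFinite μ] [SFinite ν] {k : α → β → ℝ≥0∞}
    (hk : Measurable (uncurry k)) {f : β → ℝ≥0∞} (hf : AEMeasurable f ν) {K : ℝ≥0∞}
    (hK : ∀ᵐ w ∂ν, ∫⁻ z, k z w ^ 2 ∂μ ≤ K) :
    ∫⁻ z, (∫⁻ w, k z w * f w ∂ν) ^ 2 ∂μ ≤ K * (∫⁻ w, f w ∂ν) ^ 2 := by
  have hk₂ : AEMeasurable (uncurry fun z w => k z w ^ 2 * f w) (μ.prod ν) :=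
    (hk.pow_const 2).aemeasurable.mul hf.comp_snd
  calc ∫⁻ z, (∫⁻ w, k z w * f w ∂ν) ^ 2 ∂μ
      ≤ ∫⁻ z, (∫⁻ w, k z w ^ 2 * f w ∂ν) * ∫⁻ w, f w ∂ν ∂μ :=
        lintegral_mono fun z =>
          sq_lintegral_mul_le ν (hk.comp measurable_prodMk_left).aemeasurable hf
    _ = (∫⁻ w, (∫⁻ z, k z w ^ 2 ∂μ) * f w ∂ν) * ∫⁻ w, f w ∂ν := by
        rw [lintegral_mul_const'' _ hk₂.lintegral_prod_right, lintegral_lintegral_swap hk₂]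
        congr 1
        exact lintegral_congr fun w =>
          lintegral_mul_const _ ((hk.comp measurable_prodMk_right).pow_const 2)
    _ ≤ (∫⁻ w, K * f w ∂ν) * ∫⁻ w, f w ∂ν := by
        gcongr ?_ * _
        exact lintegral_mono_ae (hK.mono fun w hw => mul_le_mul_left hw _)
    _ = K * (∫⁻ w, f w ∂ν) ^ 2 := by rw [lintegral_const_mul'' K hf, sq, mul_assoc]

theorem sq_log_le_sixteen_mul_rpow_half {y : ℝ} (hy : 1 ≤ y) :
    log y ^ 2 ≤ 16 * y ^ (1 / 2 : ℝ) := by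
  have hlog : log y ≤ 4 * y ^ (1 / 4 : ℝ) := by
    have := log_le_rpow_div (by linarith : (0 : ℝ) ≤ y) (by norm_num : (0 : ℝ) < 1 / 4)
    linarith
  calc log y ^ 2 ≤ (4 * y ^ (1 / 4 : ℝ)) ^ 2 := by gcongr; exact log_nonneg hy
    _ = 16 * y ^ (1 / 2 : ℝ) := by
      rw [mul_pow, ← rpow_natCast (y ^ _), ← rpow_mul (by linarith)]; norm_num

theorem integrableOn_sq_log_div_norm {E : Type*} [NormedAddCommGroup E] [NormedSpace ℝ E]
    [FiniteDimensional ℝ E] [MeasurableSpace E] [BorelSpace E] (μ : Measure E)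
    [μ.IsAddHaarMeasure] (hE : 1 ≤ Module.finrank ℝ E) (r : ℝ) :
    IntegrableOn (fun x => log (r / ‖x‖) ^ 2) (ball 0 r) μ := by
  refine integrableOn_ball_of_norm_le_rpow (C := 16 * r ^ (1 / 2 : ℝ)) (α := 1 / 2) hE
    (by linarith [(Nat.one_le_cast (α := ℝ)).mpr hE]) ?_
    (Measurable.aestronglyMeasurable (by fun_prop))
  refine ae_restrict_of_forall_mem measurableSet_ball fun x hx => ?_
  have hxr : ‖x‖ < r := by simpa using hx
  rcases eq_or_ne x 0 with rfl | hx0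
  · simp
  have hx' : 0 < ‖x‖ := norm_pos_iff.mpr hx0
  rw [Real.norm_of_nonneg (sq_nonneg _)]
  calc log (r / ‖x‖) ^ 2 ≤ 16 * (r / ‖x‖) ^ (1 / 2 : ℝ) :=
        sq_log_le_sixteen_mul_rpow_half ((one_le_div hx').mpr hxr.le)
    _ = 16 * r ^ (1 / 2 : ℝ) * ‖x‖ ^ (-(1 / 2) : ℝ) := by
        rw [div_rpow (by linarith) hx'.le, rpow_neg hx'.le, div_eq_mul_inv, mul_assoc]

theorem Complex.normSq_one_sub_conj_mul_sub_normSq_sub (z w : ℂ) :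
    Complex.normSq (1 - conj w * z) - Complex.normSq (z - w)
      = (1 - Complex.normSq w) * (1 - Complex.normSq z) := by
  simp only [Complex.normSq_apply, Complex.sub_re, Complex.sub_im, Complex.mul_re,
    Complex.mul_im, Complex.one_re, Complex.one_im, Complex.conj_re, Complex.conj_im]
  ring

theorem Complex.norm_sub_le_norm_one_sub_conj_mul {z w : ℂ} (hz : ‖z‖ ≤ 1) (hw : ‖w‖ ≤ 1) :
    ‖z - w‖ ≤ ‖1 - conj w * z‖ := by
  have key := Complex.normSq_one_sub_conj_mul_sub_normSq_sub z w
  rw [← Complex.sq_norm, ← Complex.sq_norm, ← Complex.sq_norm, ← Complex.sq_norm] at key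
  refine pow_le_pow_iff_left₀ (norm_nonneg _) (norm_nonneg _) two_ne_zero |>.mp ?_
  nlinarith [mul_nonneg (sub_nonneg.mpr (pow_le_one₀ (norm_nonneg w) hw (n := 2)))
    (sub_nonneg.mpr (pow_le_one₀ (norm_nonneg z) hz (n := 2)))]

theorem Complex.norm_one_sub_conj_mul_le_two {z w : ℂ} (hz : ‖z‖ ≤ 1) (hw : ‖w‖ ≤ 1) :
    ‖1 - conj w * z‖ ≤ 2 :=
  calc ‖1 - conj w * z‖ ≤ 1 + ‖w‖ * ‖z‖ := by
        simpa using norm_sub_le (1 : ℂ) (conj w * z)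
    _ ≤ 2 := by nlinarith [norm_nonneg w, norm_nonneg z]

theorem measurable_greenD : Measurable (uncurry greenD) := by
  unfold uncurry greenD; fun_prop

theorem abs_greenD_le {z w : ℂ} (hz : ‖z‖ ≤ 1) (hw : ‖w‖ ≤ 1) :
    |greenD z w| ≤ 1 / (2 * π) * log (2 / ‖z - w‖) := by
  rcases eq_or_ne z w with rfl | hzw
  · simp [greenD] -- both sides are `log 0 = 0`
  have hr : 0 < ‖z - w‖ := norm_pos_iff.mpr (sub_ne_zero.mpr hzw)
  have hrd := Complex.norm_sub_le_norm_one_sub_conj_mul hz hw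
  have hd2 := Complex.norm_one_sub_conj_mul_le_two hz hw
  have hlog : |log (‖z - w‖ / ‖1 - conj w * z‖)| ≤ log (2 / ‖z - w‖) := by
    rw [abs_of_nonpos (log_nonpos (by positivity) (div_le_one_of_le₀ hrd (norm_nonneg _))),
      ← log_inv, inv_div]
    exact log_le_log (div_pos (hr.trans_le hrd) hr) (by gcongr)
  rw [greenD, norm_div, abs_mul, abs_of_pos (by positivity)]
  gcongr

theorem lintegral_sq_greenD_le {w : ℂ} (hw : ‖w‖ ≤ 1) :
    ∫⁻ z in ball (0 : ℂ) 1, ‖greenD z w‖ₑ ^ 2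
      ≤ ∫⁻ u in ball (0 : ℂ) 2, ENNReal.ofReal ((1 / (2 * π) * log (2 / ‖u‖)) ^ 2) := by
  set h : ℂ → ℝ≥0∞ := fun u => ENNReal.ofReal ((1 / (2 * π) * log (2 / ‖u‖)) ^ 2)
  have hpt : ∀ z, (ball 0 1).indicator (fun z => ‖greenD z w‖ₑ ^ 2) z
      ≤ (ball 0 2).indicator h (z - w) := by
    intro z
    by_cases hz : z ∈ ball (0 : ℂ) 1
    · have hz' : ‖z‖ < 1 := mem_ball_zero_iff.mp hz
      have hzw : z - w ∈ ball (0 : ℂ) 2 := by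
        rw [mem_ball_zero_iff]; linarith [norm_sub_le z w]
      rw [Set.indicator_of_mem hz, Set.indicator_of_mem hzw, Real.enorm_eq_ofReal_abs,
        ← ENNReal.ofReal_pow (abs_nonneg _)]
      exact ENNReal.ofReal_le_ofReal
        (pow_le_pow_left₀ (abs_nonneg _) (abs_greenD_le hz'.le hw) 2)
    · rw [Set.indicator_of_notMem hz]; exact zero_le
  calc ∫⁻ z in ball (0 : ℂ) 1, ‖greenD z w‖ₑ ^ 2
      = ∫⁻ z, (ball 0 1).indicator (fun z => ‖greenD z w‖ₑ ^ 2) z :=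
        (lintegral_indicator measurableSet_ball _).symm
    _ ≤ ∫⁻ z, (ball 0 2).indicator h (z - w) := lintegral_mono hpt
    _ = ∫⁻ u in ball (0 : ℂ) 2, h u := by
        rw [lintegral_sub_right_eq_self (fun u => (ball 0 2).indicator h u) w,
          lintegral_indicator measurableSet_ball]

theorem exists_lintegral_sq_greenD_le :
    ∃ K < ∞, ∀ w ∈ ball (0 : ℂ) 1, ∫⁻ z in ball (0 : ℂ) 1, ‖greenD z w‖ₑ ^ 2 ≤ K := by
  refine ⟨_, ?_, fun w hw => lintegral_sq_greenD_le (mem_ball_zero_iff.mp hw).le⟩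
  simp_rw [mul_pow]
  exact IntegrableOn.setLIntegral_lt_top
    ((integrableOn_sq_log_div_norm volume (by simp) 2).const_mul _)

theorem wnorm2_le_of_enorm_le {f : ℂ → ℝ} {s : Set ℂ} {Φ : ℂ → ℝ≥0∞}
    (hΦ : AEMeasurable Φ (volume.restrict s)) (hfΦ : ∀ z ∈ s, ‖f z‖ₑ ≤ Φ z) :
    wnorm2 f s ≤ (∫⁻ z in s, Φ z ^ 2) ^ (1 / 2 : ℝ) := by
  refine iSup_le fun ⟨t, _⟩ => ?_
  have hsub : {z | z ∈ s ∧ t < |f z|} ⊆ {z | ENNReal.ofReal t ^ 2 ≤ Φ z ^ 2} ∩ s := by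
    rintro z ⟨hz, hlt⟩
    refine ⟨pow_le_pow_left₀ zero_le ((ENNReal.ofReal_le_ofReal hlt.le).trans ?_) 2, hz⟩
    simpa [Real.enorm_eq_ofReal_abs] using hfΦ z hz
  have hsqrt : ∀ x : ℝ≥0∞, (x ^ 2) ^ (1 / 2 : ℝ) = x := fun x => by
    rw [← ENNReal.rpow_natCast, ← ENNReal.rpow_mul]; norm_num
  calc ENNReal.ofReal t * volume {z | z ∈ s ∧ t < |f z|} ^ (1 / 2 : ℝ)
      = (ENNReal.ofReal t ^ 2 * volume {z | z ∈ s ∧ t < |f z|}) ^ (1 / 2 : ℝ) := by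
        rw [ENNReal.mul_rpow_of_nonneg _ _ (by norm_num), hsqrt]
    _ ≤ (ENNReal.ofReal t ^ 2 *
          volume.restrict s {z | ENNReal.ofReal t ^ 2 ≤ Φ z ^ 2}) ^ (1 / 2 : ℝ) := by
        gcongr ?_ ^ _
        gcongr _ * ?_
        exact (measure_mono hsub).trans (Measure.le_restrict_apply _ _)
    _ ≤ (∫⁻ z in s, Φ z ^ 2) ^ (1 / 2 : ℝ) := by
        gcongr
        exact mul_meas_ge_le_lintegral₀ (hΦ.pow_const 2) _

theorem stmt19 :
    ∃ C : ℝ, 0 < C ∧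
      ∀ f : ℂ → ℝ, IntegrableOn f (Metric.ball (0 : ℂ) 1) →
        wnorm2 (greenSol f) (Metric.ball (0 : ℂ) 1)
          ≤ ENNReal.ofReal (C * ∫ w in Metric.ball (0 : ℂ) 1, |f w|) := by
  obtain ⟨K, hK_top, hK⟩ := exists_lintegral_sq_greenD_le
  refine ⟨(K ^ (1 / 2 : ℝ)).toReal + 1, by positivity, fun f hf => ?_⟩
  have hF : AEMeasurable (fun w => ‖f w‖ₑ) (volume.restrict (ball 0 1)) :=
    hf.aestronglyMeasurable.enorm
  have hk : Measurable (uncurry fun z w => ‖greenD z w‖ₑ) := measurable_greenD.enorm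
  have hA : ∫⁻ w in ball 0 1, ‖f w‖ₑ = ENNReal.ofReal (∫ w in ball 0 1, |f w|) :=
    (ofReal_integral_norm_eq_lintegral_enorm hf).symm
  calc wnorm2 (greenSol f) (ball 0 1)
      ≤ (∫⁻ z in ball 0 1, (∫⁻ w in ball 0 1, ‖greenD z w‖ₑ * ‖f w‖ₑ) ^ 2) ^ (1 / 2 : ℝ) := by
        refine wnorm2_le_of_enorm_le (hk.aemeasurable.mul hF.comp_snd).lintegral_prod_right
          fun z _ => ?_
        simpa only [greenSol, enorm_mul] using
          enorm_integral_le_lintegral_enorm fun w => greenD z w * f w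
    _ ≤ (K * (∫⁻ w in ball 0 1, ‖f w‖ₑ) ^ 2) ^ (1 / 2 : ℝ) := by
        gcongr
        exact lintegral_sq_lintegral_mul_le hk hF (ae_restrict_of_forall_mem measurableSet_ball hK)
    _ = K ^ (1 / 2 : ℝ) * ENNReal.ofReal (∫ w in ball 0 1, |f w|) := by
        rw [ENNReal.mul_rpow_of_nonneg _ _ (by norm_num), ← ENNReal.rpow_natCast,
          ← ENNReal.rpow_mul, hA]
        norm_num
    _ ≤ ENNReal.ofReal ((K ^ (1 / 2 : ℝ)).toReal + 1) *
          ENNReal.ofReal (∫ w in ball 0 1, |f w|) := by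
        gcongr
        rw [ENNReal.le_ofReal_iff_toReal_le (by finiteness) (by positivity)]
        linarith
    _ = ENNReal.ofReal (((K ^ (1 / 2 : ℝ)).toReal + 1) * ∫ w in ball 0 1, |f w|) :=
        (ENNReal.ofReal_mul (by positivity)).symm
end
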